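/- Let n ≥ 4 be an even integer and let Ω be an n×n real skew-symmetric matrix (Ωᵀ = −Ω). Set H = Ω·Ωᵀ. Then tr(H³) − (1/2 + 2/n)·tr(H)·tr(H²) + (1/(2n) + 1/n²)·(tr H)³ = 0 if and only if H is a scalar matrix, i.e., H = ((tr H)/n)·I_n. -/

import Mathlib

/-!
Let `d` be the eigenvalues of `H = ΩΩᵀ` and `s = tr H`. The left-hand side equals
`∑ᵢ (dᵢ - s/n)² (dᵢ - s/2)`. Conjugating `Ω` by an orthogonal matrix that diagonalizes `H` keeps
it skew, and in a skew matrix row `i` and column `i` have the same squared norm and meet only in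
the zero diagonal entry, so `2 dᵢ ≤ s`. Hence every summand is `≤ 0`, and the sum vanishes exactly
when all `dᵢ = s/n`.
-/

open Matrix Finset Unitary

section CubicDefect

variable {ι : Type*} [Fintype ι] (d : ι → ℝ)

theorem sum_sq_sub_mean_mul_sub_half_sum :
    ∑ i, (d i - (∑ j, d j) / Fintype.card ι) ^ 2 * (d i - (∑ j, d j) / 2) =
      ∑ i, d i ^ 3 - (1 / 2 + 2 / (Fintype.card ι : ℝ)) * (∑ i, d i) * ∑ i, d i ^ 2
        + (1 / (2 * (Fintype.card ι : ℝ)) + 1 / (Fintype.card ι : ℝ) ^ 2) * (∑ i, d i) ^ 3 := by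
  rcases isEmpty_or_nonempty ι with hι | hι
  · simp
  set s := ∑ j, d j
  have hn : (Fintype.card ι : ℝ) ≠ 0 := by positivity
  have expand : ∀ i, (d i - s / Fintype.card ι) ^ 2 * (d i - s / 2) =
      d i ^ 3 - (2 * (s / Fintype.card ι) + s / 2) * d i ^ 2
        + ((s / Fintype.card ι) ^ 2 + s / Fintype.card ι * s) * d i
        - (s / Fintype.card ι) ^ 2 * (s / 2) := fun i => by ring
  simp only [expand, sum_sub_distrib, sum_add_distrib, ← mul_sum, sum_const, card_univ,
    nsmul_eq_mul]
  field_simp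
  ring

theorem cubic_defect_eq_zero_iff (hcard : 2 ≤ Fintype.card ι) (hd : ∀ i, 0 ≤ d i)
    (hbound : ∀ i, 2 * d i ≤ ∑ j, d j) :
    ∑ i, d i ^ 3 - (1 / 2 + 2 / (Fintype.card ι : ℝ)) * (∑ i, d i) * ∑ i, d i ^ 2
        + (1 / (2 * (Fintype.card ι : ℝ)) + 1 / (Fintype.card ι : ℝ) ^ 2) * (∑ i, d i) ^ 3 = 0
      ↔ ∀ i, d i = (∑ j, d j) / Fintype.card ι := by
  set s := ∑ j, d j
  set m := s / Fintype.card ι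
  have hm : m ≤ s / 2 :=
    div_le_div_of_nonneg_left (sum_nonneg fun i _ => hd i) two_pos (by exact_mod_cast hcard)
  have hterm : ∀ i ∈ univ, (d i - m) ^ 2 * (d i - s / 2) ≤ 0 := fun i _ =>
    mul_nonpos_of_nonneg_of_nonpos (sq_nonneg _) (by linarith [hbound i])
  rw [← sum_sq_sub_mean_mul_sub_half_sum, sum_eq_zero_iff_of_nonpos hterm]
  refine ⟨fun h => ?_, fun h i _ => by simp [h i]⟩
  -- every `dᵢ` is `s/n` or `s/2`, hence `≥ s/n`; as they average to `s/n`, all equal it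
  have hge : ∀ i ∈ univ, m ≤ d i := fun i hi => by
    rcases mul_eq_zero.mp (h i hi) with h | h
    · linarith [pow_eq_zero_iff two_ne_zero |>.mp h]
    · linarith
  have hsum : ∑ _i : ι, m = ∑ i, d i := by
    have hn : (Fintype.card ι : ℝ) ≠ 0 := by positivity
    rw [sum_const, card_univ, nsmul_eq_mul, mul_div_cancel₀ _ hn]
  exact fun i => ((sum_eq_sum_iff_of_le hge).mp hsum i (mem_univ i)).symm

end CubicDefect

namespace Matrix

variable {ι 𝕜 : Type*} [Fintype ι] [DecidableEq ι] [RCLike 𝕜]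

theorem trace_conjStarAlgAut (u : unitary (Matrix ι ι 𝕜)) (X : Matrix ι ι 𝕜) :
    (conjStarAlgAut 𝕜 _ u X).trace = X.trace := by
  rw [conjStarAlgAut_apply, trace_mul_cycle, coe_star_mul_self, one_mul]

namespace IsHermitian

variable {H : Matrix ι ι 𝕜} (hH : H.IsHermitian)
include hH

theorem trace_pow_eq_sum_eigenvalues_pow (k : ℕ) :
    (H ^ k).trace = ∑ i, (hH.eigenvalues i : 𝕜) ^ k := by
  rw [← trace_conjStarAlgAut (star hH.eigenvectorUnitary), map_pow,
    hH.conjStarAlgAut_star_eigenvectorUnitary, diagonal_pow, trace_diagonal]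
  rfl

theorem eq_smul_one_iff_eigenvalues_eq (c : ℝ) :
    H = (c : 𝕜) • 1 ↔ ∀ i, hH.eigenvalues i = c := by
  rw [← EmbeddingLike.apply_eq_iff_eq (conjStarAlgAut 𝕜 _ (star hH.eigenvectorUnitary)),
    map_smul, map_one, hH.conjStarAlgAut_star_eigenvectorUnitary, ← diagonal_one,
    ← diagonal_smul, diagonal_eq_diagonal_iff]
  simp

end IsHermitian

theorem two_mul_mul_transpose_apply_self_le_trace {R : Type*} [CommRing R] [LinearOrder R]
    [IsStrictOrderedRing R] {A : Matrix ι ι R} (hA : Aᵀ = -A) (i : ι) :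
    2 * (A * Aᵀ) i i ≤ (A * Aᵀ).trace := by
  have hdiag : A i i = 0 := by
    have := congrFun (congrFun hA i) i
    simp only [transpose_apply, neg_apply] at this
    linarith
  have hrow : (A * Aᵀ) i i = ∑ j, A i j ^ 2 := by simp [mul_apply, sq]
  have hcol : (A * Aᵀ) i i = ∑ j, A j i ^ 2 := by
    rw [hrow]
    exact Fintype.sum_congr _ _ fun j => by rw [← neg_sq, ← neg_apply, ← hA, transpose_apply]
  have htrace : (A * Aᵀ).trace = ∑ j, ∑ k, A j k ^ 2 := by simp [trace, mul_apply, sq]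
  have hrest : ∑ j ∈ univ.erase i, A j i ^ 2 ≤ ∑ j ∈ univ.erase i, ∑ k, A j k ^ 2 :=
    sum_le_sum fun j _ => single_le_sum (fun k _ => sq_nonneg (A j k)) (mem_univ i)
  rw [sum_erase _ (by simp [hdiag])] at hrest
  rw [htrace, ← add_sum_erase _ _ (mem_univ i), two_mul]
  nth_rw 2 [hcol]
  rw [hrow]
  exact add_le_add_right hrest _

theorem two_mul_eigenvalues_le_sum_of_transpose_eq_neg {Ω : Matrix ι ι ℝ} (hΩ : Ωᵀ = -Ω)
    (hH : (Ω * Ωᵀ).IsHermitian) (i : ι) :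
    2 * hH.eigenvalues i ≤ ∑ j, hH.eigenvalues j := by
  set φ := conjStarAlgAut ℝ _ (star hH.eigenvectorUnitary)
  have hφ : φ (Ω * Ωᵀ) = diagonal hH.eigenvalues := by
    simpa only [RCLike.ofReal_real_eq_id, Function.id_comp] using
      hH.conjStarAlgAut_star_eigenvectorUnitary
  have hφt : φ Ωᵀ = (φ Ω)ᵀ := by
    simpa only [star_eq_conjTranspose, conjTranspose_eq_transpose_of_trivial] using map_star φ Ω
  have hskew : (φ Ω)ᵀ = -φ Ω := by rw [← hφt, hΩ, map_neg]
  have := two_mul_mul_transpose_apply_self_le_trace hskew i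
  rwa [← hφt, ← map_mul, hφ, diagonal_apply_eq, trace_diagonal] at this

end Matrix

theorem stmt_8_general (n : ℕ) (hn : 4 ≤ n)
    (Ω : Matrix (Fin n) (Fin n) ℝ) (hskew : Ωᵀ = -Ω) :
    ((Ω * Ωᵀ * (Ω * Ωᵀ) * (Ω * Ωᵀ)).trace
      - (1 / 2 + 2 / (n : ℝ)) * (Ω * Ωᵀ).trace * (Ω * Ωᵀ * (Ω * Ωᵀ)).trace
      + (1 / (2 * (n : ℝ)) + 1 / (n : ℝ) ^ 2) * (Ω * Ωᵀ).trace ^ 3 = 0)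
      ↔ Ω * Ωᵀ = ((Ω * Ωᵀ).trace / (n : ℝ)) • (1 : Matrix (Fin n) (Fin n) ℝ) := by
  have hpsd : (Ω * Ωᵀ).PosSemidef := by
    simpa only [conjTranspose_eq_transpose_of_trivial] using posSemidef_self_mul_conjTranspose Ω
  have hH := hpsd.isHermitian
  have htrace (k : ℕ) : ((Ω * Ωᵀ) ^ k).trace = ∑ i, hH.eigenvalues i ^ k := by
    simpa only [RCLike.ofReal_real_eq_id, id] using hH.trace_pow_eq_sum_eigenvalues_pow k
  have htrace₁ : (Ω * Ωᵀ).trace = ∑ i, hH.eigenvalues i := by simpa using htrace 1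
  have htrace₂ : (Ω * Ωᵀ * (Ω * Ωᵀ)).trace = ∑ i, hH.eigenvalues i ^ 2 := by
    rw [← sq, htrace]
  have htrace₃ : (Ω * Ωᵀ * (Ω * Ωᵀ) * (Ω * Ωᵀ)).trace = ∑ i, hH.eigenvalues i ^ 3 := by
    rw [← sq, ← pow_succ, htrace]
  have hdefect := cubic_defect_eq_zero_iff hH.eigenvalues (by rw [Fintype.card_fin]; omega)
    hpsd.eigenvalues_nonneg (two_mul_eigenvalues_le_sum_of_transpose_eq_neg hskew hH)
  rw [Fintype.card_fin] at hdefect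
  rw [htrace₃, htrace₂, htrace₁, hdefect]
  exact (hH.eq_smul_one_iff_eigenvalues_eq _).symm

theorem stmt_8 (n : ℕ) (hn : 4 ≤ n) (hne : Even n)
    (Ω : Matrix (Fin n) (Fin n) ℝ) (hskew : Ωᵀ = -Ω) :
    ((Ω * Ωᵀ * (Ω * Ωᵀ) * (Ω * Ωᵀ)).trace
      - (1 / 2 + 2 / (n : ℝ)) * (Ω * Ωᵀ).trace * (Ω * Ωᵀ * (Ω * Ωᵀ)).trace
      + (1 / (2 * (n : ℝ)) + 1 / (n : ℝ) ^ 2) * (Ω * Ωᵀ).trace ^ 3 = 0)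
      ↔ Ω * Ωᵀ = ((Ω * Ωᵀ).trace / (n : ℝ)) • (1 : Matrix (Fin n) (Fin n) ℝ) :=
  stmt_8_general n hn Ω hskew
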